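/- There exist constants K, K' such that for all t, x > 0 with t ≠ x: R_α(t,x)² ≤ K/(x−t)² + K'/(x²−t²)². -/

import Mathlib

open MeasureTheory Real

/-- Bessel function of the first kind of order `α`, defined by its power series. -/
noncomputable def besselJ (α x : ℝ) : ℝ :=
  ∑' n : ℕ, ((-1 : ℝ) ^ n / (n.factorial * Real.Gamma (n + α + 1))) *
    (x / 2) ^ ((2 * n : ℝ) + α)

/-- The kernel `w_X(t,x) = ∫_X J_α(ts) J_α(xs) (tx)^{1/2} s ds`. -/
noncomputable def kernelW (α : ℝ) (X : Set ℝ) (t x : ℝ) : ℝ :=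
  ∫ s in X, besselJ α (t * s) * besselJ α (x * s) * Real.sqrt (t * x) * s

/-- The reproducing kernel `R_α = w_{[0,1]}`. -/
noncomputable def Rker (α : ℝ) (t x : ℝ) : ℝ := kernelW α (Set.Icc 0 1) t x

/-!
Put `u(y) = √y J_α(y)`. Writing `J_α(y) = (y/2)^α S_{α+1}(y²/4)` with the entire functions
`S_β(z) = ∑ (-1)ⁿ zⁿ / (n! Γ(n+β))`, which satisfy `S_β' = -S_{β+1}` and
`z S_{β+2} = β S_{β+1} - S_β`, one gets `u'' = -(1 + (1/4 - α²)/y²) u` for `y > 0`. For `y ≥ 1`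
the energy `(u² + u'²) e^{|1/4 - α²|/y}` is nonincreasing, so `u` and `u'` are bounded there,
while on `(0, 1]` the series bounds `u` and `y u'` because `α > -1/2`.

The kernel is `R_α(t,x) = ∫₀¹ u(ts) u(xs) ds`. As `s ↦ u(ts)` and `s ↦ u(xs)` solve equations
differing only in the constants `t²` and `x²`, the Wronskian `t u'(ts) u(xs) - x u(ts) u'(xs)` has
derivative `(x² - t²) u(ts) u(xs)`, and it vanishes at `s = 0`. Hence
`(x² - t²) R_α(t,x) = t u'(t) u(x) - x u(t) u'(x) = O(1 + t + x)`.
-/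

open Filter
open scoped Nat

noncomputable def besselCoeff (β : ℝ) (n : ℕ) : ℝ := (-1) ^ n / (n ! * Gamma (n + β))

noncomputable def besselSeries (β z : ℝ) : ℝ := ∑' n, besselCoeff β n * z ^ n

section BesselSeries

variable {β : ℝ}

theorem succ_mul_besselCoeff_succ (n : ℕ) :
    (n + 1) * besselCoeff β (n + 1) = -besselCoeff (β + 1) n := by
  have hΓ : ((n + 1 : ℕ) : ℝ) + β = n + (β + 1) := by push_cast; ring
  rw [besselCoeff, besselCoeff, hΓ, Nat.factorial_succ, pow_succ]
  push_cast
  have : (n + 1 : ℝ) ≠ 0 := by positivity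
  field_simp

theorem add_mul_besselCoeff_add_one (hβ : 0 < β) (n : ℕ) :
    (n + β) * besselCoeff (β + 1) n = besselCoeff β n := by
  have hnβ : (n : ℝ) + β ≠ 0 := by positivity
  rw [besselCoeff, besselCoeff, ← add_assoc, Gamma_add_one hnβ]
  have : Gamma (n + β) ≠ 0 := (Gamma_pos_of_pos (by positivity)).ne'
  have : (n ! : ℝ) ≠ 0 := by positivity
  field_simp

theorem besselCoeff_succ (hβ : 0 < β) (n : ℕ) :
    besselCoeff β (n + 1) = -besselCoeff β n / ((n + 1) * (n + β)) := by
  have h := succ_mul_besselCoeff_succ (β := β) n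
  rw [← add_mul_besselCoeff_add_one hβ n]
  have : (n + 1 : ℝ) ≠ 0 := by positivity
  have : (n + β : ℝ) ≠ 0 := by positivity
  field_simp
  linarith

theorem besselCoeff_ne_zero (hβ : 0 < β) (n : ℕ) : besselCoeff β n ≠ 0 := by
  have : Gamma (n + β) ≠ 0 := (Gamma_pos_of_pos (by positivity)).ne'
  unfold besselCoeff
  positivity

theorem radius_ofScalars_besselCoeff (hβ : 0 < β) :
    (FormalMultilinearSeries.ofScalars ℝ (besselCoeff β)).radius = ⊤ := by
  refine FormalMultilinearSeries.ofScalars_radius_eq_top_of_tendsto _ _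
    (Eventually.of_forall (besselCoeff_ne_zero hβ)) ?_
  have hratio : ∀ n : ℕ, ‖besselCoeff β n.succ‖ / ‖besselCoeff β n‖
      = ((n + 1) * (n + β))⁻¹ := fun n => by
    have := norm_ne_zero_iff.mpr (besselCoeff_ne_zero hβ n)
    rw [Nat.succ_eq_add_one, besselCoeff_succ hβ, norm_div, norm_neg,
      Real.norm_of_nonneg (by positivity : (0 : ℝ) ≤ (n + 1) * (n + β))]
    field_simp
  simp_rw [hratio]
  exact ((tendsto_atTop_add_const_right _ 1 tendsto_natCast_atTop_atTop).atTop_mul_atTop₀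
    (tendsto_atTop_add_const_right _ β tendsto_natCast_atTop_atTop)).inv_tendsto_atTop

theorem summable_abs_besselCoeff_mul_pow (hβ : 0 < β) (r : ℝ) :
    Summable fun n => |besselCoeff β n| * |r| ^ n := by
  have h := (FormalMultilinearSeries.ofScalars ℝ (besselCoeff β)).summable_norm_mul_pow
    (r := ‖r‖₊) (by rw [radius_ofScalars_besselCoeff hβ]; exact ENNReal.coe_lt_top)
  simpa [FormalMultilinearSeries.ofScalars_norm] using h

theorem summable_besselCoeff_mul_pow (hβ : 0 < β) (z : ℝ) :
    Summable fun n => besselCoeff β n * z ^ n :=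
  .of_norm <| by simpa [abs_mul, abs_pow] using summable_abs_besselCoeff_mul_pow hβ z

theorem hasDerivAt_besselSeries (hβ : 0 < β) (z : ℝ) :
    HasDerivAt (besselSeries β) (-besselSeries (β + 1) z) z := by
  set R := |z| + 1
  have hsum : Summable fun n => |besselCoeff (β + 1) (n - 1)| * R ^ (n - 1) := by
    refine (summable_nat_add_iff 1).mp ?_
    simpa [R, abs_of_pos (by positivity : 0 < |z| + 1)] using
      summable_abs_besselCoeff_mul_pow (by linarith : 0 < β + 1) R
  have hterm : ∀ n : ℕ, besselCoeff β (n + 1) * ((n + 1 : ℕ) * z ^ (n + 1 - 1))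
      = -(besselCoeff (β + 1) n * z ^ n) := fun n => by
    rw [Nat.add_sub_cancel, ← mul_assoc, mul_comm (besselCoeff β _), Nat.cast_succ,
      succ_mul_besselCoeff_succ, neg_mul]
  have hderiv := hasDerivAt_tsum_of_isPreconnected hsum Metric.isOpen_ball
    (convex_ball (0 : ℝ) R).isPreconnected
    (g := fun n y => besselCoeff β n * y ^ n)
    (g' := fun n y => besselCoeff β n * (n * y ^ (n - 1)))
    (fun n y _ => (hasDerivAt_pow n y).const_mul _) ?_ (Metric.mem_ball_self (by positivity))
    (summable_besselCoeff_mul_pow hβ 0) (y := z) (by simp [R])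
  · refine hderiv.congr_deriv ?_
    rw [tsum_eq_zero_add', Nat.cast_zero, zero_mul, mul_zero, zero_add]
    · simp only [hterm, tsum_neg, besselSeries]
    · simpa only [hterm] using (summable_besselCoeff_mul_pow (by linarith) z).neg
  · rintro (_ | n) y hy
    · simp
    · have hy : |y| ≤ R := by rw [Metric.mem_ball, dist_zero_right] at hy; exact hy.le
      rw [Nat.add_sub_cancel, ← mul_assoc, mul_comm (besselCoeff β _), Nat.cast_succ,
        succ_mul_besselCoeff_succ, norm_mul, norm_neg, norm_pow, Real.norm_eq_abs,
        Real.norm_eq_abs]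
      gcongr

theorem continuous_besselSeries (hβ : 0 < β) : Continuous (besselSeries β) :=
  continuous_iff_continuousAt.2 fun z => (hasDerivAt_besselSeries hβ z).continuousAt

theorem besselSeries_add_two (hβ : 0 < β) (z : ℝ) :
    z * besselSeries (β + 2) z = β * besselSeries (β + 1) z - besselSeries β z := by
  have hβ₁ : 0 < β + 1 := by linarith
  have hshift : ∀ n : ℕ, ((n + 1 : ℕ) : ℝ) * besselCoeff (β + 1) (n + 1) * z ^ (n + 1)
      = -(z * (besselCoeff (β + 2) n * z ^ n)) := fun n => by
    rw [Nat.cast_succ, succ_mul_besselCoeff_succ, show β + 1 + 1 = β + 2 by ring, pow_succ]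
    ring
  have hsplit : ∀ n : ℕ, besselCoeff β n * z ^ n - β * (besselCoeff (β + 1) n * z ^ n)
      = n * besselCoeff (β + 1) n * z ^ n := fun n => by
    rw [← add_mul_besselCoeff_add_one hβ n]
    ring
  have hsum : Summable fun n : ℕ => n * besselCoeff (β + 1) n * z ^ n := by
    simpa only [hsplit] using (summable_besselCoeff_mul_pow hβ z).sub
      ((summable_besselCoeff_mul_pow hβ₁ z).mul_left β)
  calc z * besselSeries (β + 2) z
      = -∑' n : ℕ, ((n + 1 : ℕ) : ℝ) * besselCoeff (β + 1) (n + 1) * z ^ (n + 1) := by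
        simp only [hshift, tsum_neg, neg_neg, besselSeries, tsum_mul_left]
    _ = -∑' n : ℕ, n * besselCoeff (β + 1) n * z ^ n := by
        rw [tsum_eq_zero_add' ((summable_nat_add_iff 1).mpr hsum)]
        simp
    _ = β * besselSeries (β + 1) z - besselSeries β z := by
        rw [← tsum_congr hsplit, (summable_besselCoeff_mul_pow hβ z).tsum_sub
          ((summable_besselCoeff_mul_pow hβ₁ z).mul_left β), tsum_mul_left]
        simp only [besselSeries]
        ring

theorem hasDerivAt_besselSeries_comp_sq_div_four (hβ : 0 < β) (y : ℝ) :
    HasDerivAt (fun y => besselSeries β (y ^ 2 / 4))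
      (-besselSeries (β + 1) (y ^ 2 / 4) * (y / 2)) y := by
  refine (hasDerivAt_besselSeries hβ _).comp y (((hasDerivAt_pow 2 y).div_const 4).congr_deriv ?_)
  push_cast
  ring

end BesselSeries

theorem sq_add_sq_le_of_hasDerivAt_neg_one_add_div_sq {u v : ℝ → ℝ} {a c : ℝ} (ha : 0 < a)
    (hu : ∀ y, a ≤ y → HasDerivAt u (v y) y)
    (hv : ∀ y, a ≤ y → HasDerivAt v (-(1 + c / y ^ 2) * u y) y) {y : ℝ} (hy : a ≤ y) :
    u y ^ 2 + v y ^ 2 ≤ (u a ^ 2 + v a ^ 2) * exp (|c| / a) := by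
  set Φ := fun y => (u y ^ 2 + v y ^ 2) * exp (|c| / y)
  have hΦ : ∀ y, a ≤ y → HasDerivAt Φ
      (-(2 * c * (u y * v y) + |c| * (u y ^ 2 + v y ^ 2)) * exp (|c| / y) / y ^ 2) y := by
    intro y hy
    have hy₀ : y ≠ 0 := (ha.trans_le hy).ne'
    have h := (((hu y hy).pow 2).add ((hv y hy).pow 2)).mul
      ((hasDerivAt_inv hy₀).const_mul |c|).exp
    refine h.congr_deriv ?_
    simp only [Pi.add_apply, Pi.pow_apply]
    field_simp
    ring
  have hanti : AntitoneOn Φ (Set.Ici a) := by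
    refine antitoneOn_of_hasDerivWithinAt_nonpos (convex_Ici a)
      (fun y hy => (hΦ y hy).continuousAt.continuousWithinAt)
      (fun y hy => (hΦ y (interior_subset hy)).hasDerivWithinAt) fun y _ => ?_
    have huv : |2 * (u y * v y)| ≤ u y ^ 2 + v y ^ 2 := by
      rw [abs_mul, abs_two, abs_mul]
      nlinarith [sq_nonneg (|u y| - |v y|), sq_abs (u y), sq_abs (v y)]
    have hcuv : |2 * c * (u y * v y)| ≤ |c| * (u y ^ 2 + v y ^ 2) := by
      rw [mul_comm 2 c, mul_assoc, abs_mul]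
      exact mul_le_mul_of_nonneg_left huv (abs_nonneg c)
    have : 0 ≤ 2 * c * (u y * v y) + |c| * (u y ^ 2 + v y ^ 2) := by
      linarith [neg_abs_le (2 * c * (u y * v y))]
    have := exp_pos (|c| / y)
    rw [neg_mul, neg_div]
    exact neg_nonpos.mpr (by positivity)
  calc u y ^ 2 + v y ^ 2 ≤ Φ y :=
        le_mul_of_one_le_right (by positivity)
          (one_le_exp (div_nonneg (abs_nonneg c) (ha.le.trans hy)))
    _ ≤ Φ a := hanti Set.self_mem_Ici hy hy

/-- Equal to `2 ^ α * √y * J_α(y)` for `y ≥ 0`. -/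
noncomputable def besselU (α y : ℝ) : ℝ := y ^ (α + 1 / 2) * besselSeries (α + 1) (y ^ 2 / 4)

noncomputable def besselUDeriv (α y : ℝ) : ℝ :=
  y ^ (α + 1 / 2) * ((α + 1 / 2) * besselSeries (α + 1) (y ^ 2 / 4)
    - y ^ 2 / 2 * besselSeries (α + 2) (y ^ 2 / 4)) / y

section BesselU

variable {α : ℝ}

theorem hasDerivAt_besselU (hα : -1 < α) {y : ℝ} (hy : 0 < y) :
    HasDerivAt (besselU α) (besselUDeriv α y) y := by
  have h := (Real.hasDerivAt_rpow_const (p := α + 1 / 2) (Or.inl hy.ne')).mul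
    (hasDerivAt_besselSeries_comp_sq_div_four (by linarith : 0 < α + 1) y)
  refine h.congr_deriv ?_
  rw [besselUDeriv, Real.rpow_sub_one hy.ne', show α + 1 + 1 = α + 2 by ring]
  field_simp
  ring

theorem hasDerivAt_besselUDeriv (hα : -1 < α) {y : ℝ} (hy : 0 < y) :
    HasDerivAt (besselUDeriv α) (-(1 + (1 / 4 - α ^ 2) / y ^ 2) * besselU α y) y := by
  have hF := hasDerivAt_besselSeries_comp_sq_div_four (by linarith : 0 < α + 1) y
  have hG := hasDerivAt_besselSeries_comp_sq_div_four (by linarith : 0 < α + 2) y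
  have hP := Real.hasDerivAt_rpow_const (p := α + 1 / 2) (Or.inl hy.ne')
  have h := (hP.mul (((hF.const_mul (α + 1 / 2)).sub
    (((hasDerivAt_pow 2 y).div_const 2).mul hG)))).div (hasDerivAt_id y) hy.ne'
  refine h.congr_deriv ?_
  have hrel := besselSeries_add_two (by linarith : 0 < α + 1) (y ^ 2 / 4)
  rw [show α + 1 + 2 = α + 3 by ring, show α + 1 + 1 = α + 2 by ring] at hrel
  simp only [Pi.mul_apply, Pi.sub_apply, id_eq]
  rw [besselU, Real.rpow_sub_one hy.ne', show α + 2 + 1 = α + 3 by ring,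
    show α + 1 + 1 = α + 2 by ring]
  set P := y ^ (α + 1 / 2)
  set F := besselSeries (α + 1) (y ^ 2 / 4)
  set G := besselSeries (α + 2) (y ^ 2 / 4)
  set H := besselSeries (α + 3) (y ^ 2 / 4)
  field_simp
  linear_combination 16 * P * y ^ 2 * hrel

theorem continuous_besselU (hα : -(1 / 2 : ℝ) < α) : Continuous (besselU α) := by
  have hF := continuous_besselSeries (by linarith : 0 < α + 1)
  have hP : Continuous fun y : ℝ => y ^ (α + 1 / 2) := continuous_rpow_const (by linarith)
  unfold besselU
  fun_prop

theorem continuous_mul_besselUDeriv (hα : -(1 / 2 : ℝ) < α) :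
    Continuous fun y => y * besselUDeriv α y := by
  have hF := continuous_besselSeries (by linarith : 0 < α + 1)
  have hG := continuous_besselSeries (by linarith : 0 < α + 2)
  have hP : Continuous fun y : ℝ => y ^ (α + 1 / 2) := continuous_rpow_const (by linarith)
  have heq : (fun y => y * besselUDeriv α y) = fun y => y ^ (α + 1 / 2) *
      ((α + 1 / 2) * besselSeries (α + 1) (y ^ 2 / 4) - y ^ 2 / 2 * besselSeries (α + 2) (y ^ 2 / 4)) := by
    funext y
    rcases eq_or_ne y 0 with rfl | hy
    · rw [zero_mul, Real.zero_rpow (by linarith : (0 : ℝ) < α + 1 / 2).ne', zero_mul]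
    · rw [besselUDeriv, mul_div_cancel₀ _ hy]
  rw [heq]
  fun_prop

theorem exists_bound_besselU_of_one_le (hα : -1 < α) :
    ∃ M, ∀ y, 1 ≤ y → |besselU α y| ≤ M ∧ |besselUDeriv α y| ≤ M := by
  refine ⟨√((besselU α 1 ^ 2 + besselUDeriv α 1 ^ 2) * exp (|1 / 4 - α ^ 2| / 1)), fun y hy => ?_⟩
  have hE := sq_add_sq_le_of_hasDerivAt_neg_one_add_div_sq one_pos
    (fun y hy => hasDerivAt_besselU hα (by linarith))
    (fun y hy => hasDerivAt_besselUDeriv hα (by linarith)) hy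
  exact ⟨Real.abs_le_sqrt (by nlinarith [sq_nonneg (besselUDeriv α y)]),
    Real.abs_le_sqrt (by nlinarith [sq_nonneg (besselU α y)])⟩

theorem exists_bound_besselU (hα : -(1 / 2 : ℝ) < α) :
    ∃ M, ∀ y, 0 < y → |besselU α y| ≤ M ∧ |y * besselUDeriv α y| ≤ M * (1 + y) := by
  obtain ⟨M₁, hM₁⟩ := isCompact_Icc.exists_bound_of_continuousOn
    (continuous_besselU hα).continuousOn (s := Set.Icc 0 1)
  obtain ⟨M₂, hM₂⟩ := isCompact_Icc.exists_bound_of_continuousOn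
    (continuous_mul_besselUDeriv hα).continuousOn (s := Set.Icc 0 1)
  obtain ⟨M₃, hM₃⟩ := exists_bound_besselU_of_one_le (by linarith)
  refine ⟨max (max M₁ M₂) M₃, fun y hy => ?_⟩
  have hM₃₀ : 0 ≤ M₃ := (abs_nonneg _).trans (hM₃ 1 le_rfl).1
  rcases le_total y 1 with hy₁ | hy₁
  · have hmem : y ∈ Set.Icc (0 : ℝ) 1 := ⟨hy.le, hy₁⟩
    refine ⟨(hM₁ y hmem).trans ((le_max_left _ _).trans (le_max_left _ _)), ?_⟩
    calc |y * besselUDeriv α y| ≤ max (max M₁ M₂) M₃ :=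
          (hM₂ y hmem).trans ((le_max_right _ _).trans (le_max_left _ _))
      _ ≤ max (max M₁ M₂) M₃ * (1 + y) :=
        le_mul_of_one_le_right (hM₃₀.trans (le_max_right _ _)) (by linarith)
  · obtain ⟨h₁, h₂⟩ := hM₃ y hy₁
    refine ⟨h₁.trans (le_max_right _ _), ?_⟩
    rw [abs_mul, abs_of_pos hy]
    nlinarith [le_max_right (max M₁ M₂) M₃, abs_nonneg (besselUDeriv α y)]

theorem hasDerivAt_wronskian_besselU (hα : -1 < α) {t x s : ℝ} (ht : 0 < t)
    (hx : 0 < x) (hs : 0 < s) :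
    HasDerivAt (fun s => t * besselUDeriv α (t * s) * besselU α (x * s)
        - x * besselU α (t * s) * besselUDeriv α (x * s))
      ((x ^ 2 - t ^ 2) * (besselU α (t * s) * besselU α (x * s))) s := by
  have hUt := (hasDerivAt_besselU hα (mul_pos ht hs)).comp s (hasDerivAt_const_mul t)
  have hUx := (hasDerivAt_besselU hα (mul_pos hx hs)).comp s (hasDerivAt_const_mul x)
  have hU't := (hasDerivAt_besselUDeriv hα (mul_pos ht hs)).comp s (hasDerivAt_const_mul t)
  have hU'x := (hasDerivAt_besselUDeriv hα (mul_pos hx hs)).comp s (hasDerivAt_const_mul x)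
  refine ((hU't.const_mul t).mul hUx).sub ((hUt.const_mul x).mul hU'x) |>.congr_deriv ?_
  simp only [Function.comp_apply]
  field_simp
  ring

theorem sub_mul_integral_besselU_mul_besselU (hα : -(1 / 2 : ℝ) < α) {t x : ℝ} (ht : 0 < t)
    (hx : 0 < x) :
    (x ^ 2 - t ^ 2) * ∫ s in (0 : ℝ)..1, besselU α (t * s) * besselU α (x * s)
      = t * besselUDeriv α t * besselU α x - x * besselU α t * besselUDeriv α x := by
  set F := fun y : ℝ => besselSeries (α + 1) (y ^ 2 / 4)
  set G := fun y : ℝ => besselSeries (α + 2) (y ^ 2 / 4)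
  -- The leading terms of the Wronskian cancel; what is left extends continuously by `0` to `s = 0`.
  set V := fun s : ℝ => (t * s) ^ (α + 1 / 2) * (x * s) ^ (α + 1 / 2) * (s / 2)
    * (x ^ 2 * F (t * s) * G (x * s) - t ^ 2 * G (t * s) * F (x * s))
  have hV : ∀ s, 0 < s → V s = t * besselUDeriv α (t * s) * besselU α (x * s)
      - x * besselU α (t * s) * besselUDeriv α (x * s) := by
    intro s hs
    have : 0 < t * s := mul_pos ht hs
    have : 0 < x * s := mul_pos hx hs
    simp only [V, F, G, besselU, besselUDeriv]
    field_simp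
    ring
  have hV_cont : Continuous V := by
    have hF : Continuous F := (continuous_besselSeries (by linarith)).comp (by fun_prop)
    have hG : Continuous G := (continuous_besselSeries (by linarith)).comp (by fun_prop)
    have hP : Continuous fun y : ℝ => y ^ (α + 1 / 2) := continuous_rpow_const (by linarith)
    fun_prop
  have hV_deriv : ∀ s ∈ Set.Ioo (0 : ℝ) 1,
      HasDerivAt V ((x ^ 2 - t ^ 2) * (besselU α (t * s) * besselU α (x * s))) s := by
    intro s hs
    refine (hasDerivAt_wronskian_besselU (by linarith) ht hx hs.1).congr_of_eventuallyEq ?_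
    filter_upwards [Ioi_mem_nhds hs.1] with s hs using hV s hs
  have hU := continuous_besselU hα
  have hFTC := intervalIntegral.integral_eq_sub_of_hasDerivAt_of_le zero_le_one
    hV_cont.continuousOn hV_deriv
    ((by fun_prop : Continuous fun s => (x ^ 2 - t ^ 2) *
      (besselU α (t * s) * besselU α (x * s))).intervalIntegrable 0 1)
  have hV₀ : V 0 = 0 := by simp [V]
  rw [← intervalIntegral.integral_const_mul, hFTC, hV₀, sub_zero, hV 1 one_pos, mul_one, mul_one]

theorem sqrt_mul_besselJ (hα : -(1 / 2 : ℝ) < α) {y : ℝ} (hy : 0 ≤ y) :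
    √y * besselJ α y = besselU α y / 2 ^ α := by
  rcases hy.eq_or_lt with rfl | hy
  · rw [besselU, Real.zero_rpow (by linarith : (0 : ℝ) < α + 1 / 2).ne', Real.sqrt_zero]
    ring
  have hterm : ∀ n : ℕ, (-1 : ℝ) ^ n / (n ! * Gamma (n + α + 1)) * (y / 2) ^ ((2 * n : ℝ) + α)
      = besselCoeff (α + 1) n * (y ^ 2 / 4) ^ n * (y ^ α / 2 ^ α) := fun n => by
    rw [Real.rpow_add (by positivity), Real.div_rpow hy.le zero_le_two α,
      show (2 * n : ℝ) = ((2 * n : ℕ) : ℝ) by push_cast; ring, Real.rpow_natCast, pow_mul,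
      besselCoeff, add_assoc]
    ring
  rw [besselJ, tsum_congr hterm, tsum_mul_right, besselU, besselSeries, Real.sqrt_eq_rpow,
    Real.rpow_add hy]
  ring

theorem Rker_eq_integral (hα : -(1 / 2 : ℝ) < α) {t x : ℝ} (ht : 0 ≤ t) (hx : 0 ≤ x) :
    Rker α t x = (∫ s in (0 : ℝ)..1, besselU α (t * s) * besselU α (x * s)) / (2 ^ α) ^ 2 := by
  rw [Rker, kernelW, integral_Icc_eq_integral_Ioc, ← intervalIntegral.integral_of_le zero_le_one,
    ← intervalIntegral.integral_div]
  refine intervalIntegral.integral_congr fun s hs => ?_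
  rw [Set.uIcc_of_le zero_le_one] at hs
  have hts : 0 ≤ t * s := mul_nonneg ht hs.1
  have hxs : 0 ≤ x * s := mul_nonneg hx hs.1
  have hsqrt : √(t * x) * s = √(t * s) * √(x * s) := by
    rw [← Real.sqrt_mul hts, show t * s * (x * s) = t * x * s ^ 2 by ring,
      Real.sqrt_mul (mul_nonneg ht hx), Real.sqrt_sq hs.1]
  rw [mul_assoc, hsqrt, mul_mul_mul_comm, mul_comm (besselJ α _), mul_comm (besselJ α _),
    sqrt_mul_besselJ hα hts, sqrt_mul_besselJ hα hxs]
  ring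

end BesselU

theorem sq_le_of_abs_mul_sq_sub_sq_le {r t x κ : ℝ} (ht : 0 < t) (hx : 0 < x) (htx : t ≠ x)
    (h : |r * (x ^ 2 - t ^ 2)| ≤ κ * (2 + t + x)) :
    r ^ 2 ≤ 2 * κ ^ 2 / (x - t) ^ 2 + 8 * κ ^ 2 / (x ^ 2 - t ^ 2) ^ 2 := by
  have hxt : x - t ≠ 0 := sub_ne_zero.mpr htx.symm
  have hxt' : x + t ≠ 0 := by positivity
  have hD : 0 < (x ^ 2 - t ^ 2) ^ 2 := by
    rw [show x ^ 2 - t ^ 2 = (x - t) * (x + t) by ring]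
    positivity
  have hsq : (r * (x ^ 2 - t ^ 2)) ^ 2 ≤ (κ * (2 + t + x)) ^ 2 :=
    sq_le_sq' (neg_le_of_abs_le h) (le_of_abs_le h)
  rw [show 2 * κ ^ 2 / (x - t) ^ 2 + 8 * κ ^ 2 / (x ^ 2 - t ^ 2) ^ 2
      = (2 * κ ^ 2 * (x + t) ^ 2 + 8 * κ ^ 2) / (x ^ 2 - t ^ 2) ^ 2 by
    rw [show x ^ 2 - t ^ 2 = (x - t) * (x + t) by ring]; field_simp, le_div_iff₀ hD]
  nlinarith [sq_nonneg (κ * (t + x) - 2 * κ)]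

/-- Pointwise off-diagonal bound for the squared reproducing kernel. -/
theorem Rker_sq_pointwise_bound (α : ℝ) (hα : -(1 / 2 : ℝ) < α) :
    ∃ K K' : ℝ, ∀ t x : ℝ, 0 < t → 0 < x → t ≠ x →
      Rker α t x ^ 2 ≤ K / (x - t) ^ 2 + K' / (x ^ 2 - t ^ 2) ^ 2 := by
  obtain ⟨M, hM⟩ := exists_bound_besselU hα
  set κ := M ^ 2 / (2 ^ α) ^ 2
  refine ⟨2 * κ ^ 2, 8 * κ ^ 2, fun t x ht hx htx => sq_le_of_abs_mul_sq_sub_sq_le ht hx htx ?_⟩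
  obtain ⟨hut, hut'⟩ := hM t ht
  obtain ⟨hux, hux'⟩ := hM x hx
  have hM₀ : 0 ≤ M := (abs_nonneg _).trans hut
  have hW : |t * besselUDeriv α t * besselU α x - x * besselU α t * besselUDeriv α x|
      ≤ M ^ 2 * (2 + t + x) := by
    rw [show t * besselUDeriv α t * besselU α x - x * besselU α t * besselUDeriv α x
      = t * besselUDeriv α t * besselU α x - besselU α t * (x * besselUDeriv α x) by ring]
    calc _ ≤ |t * besselUDeriv α t| * |besselU α x| + |besselU α t| * |x * besselUDeriv α x| := by
          rw [← abs_mul, ← abs_mul]; exact abs_sub _ _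
      _ ≤ M * (1 + t) * M + M * (M * (1 + x)) := by gcongr
      _ = M ^ 2 * (2 + t + x) := by ring
  rw [Rker_eq_integral hα ht.le hx.le, div_mul_eq_mul_div, mul_comm,
    sub_mul_integral_besselU_mul_besselU hα ht hx, abs_div,
    abs_of_pos (by positivity : (0 : ℝ) < (2 ^ α) ^ 2)]
  calc _ ≤ M ^ 2 * (2 + t + x) / (2 ^ α) ^ 2 := by gcongr
    _ = κ * (2 + t + x) := by ring
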